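/- Let (G,<) be an ordered group, K a division ring, and K((G,<)) the Malcev-Neumann series field. Let α be an ordinal and {H_β}_{β≤α} a family of principal convex subgroups of G order-isomorphic to {β : β ≤ α}, with H_β = {x : t_β^{-n} ≤ x ≤ t_β^n for some n} for chosen elements t_β > 1. If {f_β}_{β≤α} is a family in K((G,<)) with supp(f_β) ⊆ {x ∈ H_β : x ≥ 1} for all β, then the union ⋃_{β≤α} supp(t_β f_β) is well-ordered and each x ∈ G lies in supp(t_β f_β) for only finitely many β; hence the sum Σ_{β≤α} t_β f_β is a well-defined element of K((G,<)). -/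

import Mathlib

/-!
Left multiplication by `t_β` translates supports, so `supp (t_β f_β) ⊆ t_β • H_β^{≥1}`.
A strict inclusion `H_β ⊂ H_γ` forces `t_β ^ m < t_γ` for every `m`, hence every element of
`t_β • H_β` lies below every element of `t_γ • H_γ^{≥1}`: the supports form layers ordered
like the indices. A union of well-ordered layers indexed by a well-order is well-ordered, and
each point lies in at most one layer, so the pointwise sum has well-ordered support.
-/

open Function Set
open scoped Pointwise

/-- The paper's `H_t`: for `t > 1`, the smallest convex subgroup containing `t`. -/
def principalConvex {G : Type*} [Group G] [LE G] (t : G) : Set G :=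
  {x | ∃ n : ℕ, t⁻¹ ^ n ≤ x ∧ x ≤ t ^ n}

section OrderedGroup

variable {G : Type*} [Group G]

theorem principalConvex_subset_of_le_pow [Preorder G] [MulLeftMono G] [MulRightMono G]
    {s t : G} {m : ℕ} (h : t ≤ s ^ m) : principalConvex t ⊆ principalConvex s := by
  rintro x ⟨k, hlo, hhi⟩
  have hpow : t ^ k ≤ s ^ (m * k) := (pow_le_pow_left' h k).trans_eq (pow_mul s m k).symm
  refine ⟨m * k, ?_, hhi.trans hpow⟩
  rw [inv_pow] at hlo ⊢
  exact (inv_le_inv_iff.2 hpow).trans hlo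

variable [LinearOrder G] [MulLeftMono G] [MulRightMono G]

theorem pow_lt_of_principalConvex_ssubset {s t : G} (h : principalConvex s ⊂ principalConvex t)
    (m : ℕ) : s ^ m < t :=
  lt_of_not_ge fun hle => h.2 (principalConvex_subset_of_le_pow hle)

theorem mul_lt_mul_of_principalConvex_ssubset {s t a b : G}
    (h : principalConvex s ⊂ principalConvex t) (ha : a ∈ principalConvex s) (hb : 1 ≤ b) :
    s * a < t * b := by
  obtain ⟨n, -, ha⟩ := ha
  calc s * a ≤ s ^ (n + 1) := by rw [pow_succ']; exact mul_le_mul_right ha s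
    _ < t := pow_lt_of_principalConvex_ssubset h (n + 1)
    _ ≤ t * b := le_mul_of_one_le_right' hb

end OrderedGroup

section Layered

variable {ι α : Type*} [LinearOrder ι] [Preorder α] {S : ι → Set α}

theorem subsingleton_of_layered (hS : ∀ i j, i < j → ∀ x ∈ S i, ∀ y ∈ S j, x < y)
    (x : α) : {i | x ∈ S i}.Subsingleton := by
  intro i hi j hj
  by_contra hne
  rcases lt_or_gt_of_ne hne with h | h
  · exact lt_irrefl x (hS i j h x hi x hj)
  · exact lt_irrefl x (hS j i h x hj x hi)

/-- Along a descending sequence the layer index can only decrease, so it is eventually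
constant. -/
theorem isWF_iUnion_of_layered [WellFoundedLT ι] (hwf : ∀ i, (S i).IsWF)
    (hS : ∀ i j, i < j → ∀ x ∈ S i, ∀ y ∈ S j, x < y) : (⋃ i, S i).IsWF := by
  rw [isWF_iff_no_descending_seq]
  intro g hg hmem
  choose idx hidx using fun n => mem_iUnion.1 (hmem n)
  have hanti : Antitone idx := fun n m hnm =>
    le_of_not_gt fun hlt => (hS _ _ hlt _ (hidx n) _ (hidx m)).not_ge (hg.antitone hnm)
  obtain ⟨N, hN⟩ : ∃ N, ∀ m, N ≤ m → idx N = idx m :=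
    WellFoundedGT.monotone_chain_condition (α := ιᵒᵈ) ⟨idx, hanti⟩
  refine isWF_iff_no_descending_seq.1 (hwf (idx N)) (fun n => g (N + n))
    (hg.comp_strictMono fun _ _ h => by omega) fun n => ?_
  rw [hN (N + n) (by omega)]
  exact hidx (N + n)

end Layered

theorem support_finsum_subset_iUnion {ι α M : Type*} [AddCommMonoid M] (F : ι → α → M) :
    support (fun x => ∑ᶠ i, F i x) ⊆ ⋃ i, support (F i) := by
  intro x hx
  by_contra hnot
  simp only [mem_iUnion, mem_support, not_exists, not_not] at hnot
  exact hx (finsum_eq_zero_of_forall_eq_zero hnot)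

section Series

variable {K G D : Type*} [NonAssocSemiring K] [Group G] [DecidableEq G] [Mul D]
  {coeff : D → G → K} {emb : G → D}

theorem coeff_emb_mul
    (hmul : ∀ f g : D, ∀ x : G, coeff (f * g) x =
      ∑ᶠ p : G × G, if p.1 * p.2 = x then coeff f p.1 * coeff g p.2 else 0)
    (hemb : ∀ g x : G, coeff (emb g) x = if x = g then 1 else 0) (g : G) (h : D) (x : G) :
    coeff (emb g * h) x = coeff h (g⁻¹ * x) := by
  rw [hmul, finsum_eq_single _ (g, g⁻¹ * x)]
  · simp [hemb]
  · rintro ⟨p₁, p₂⟩ hp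
    by_cases h₁ : p₁ = g
    · subst h₁
      have h₂ : p₁ * p₂ ≠ x := fun h₂ => hp (by rw [← h₂, inv_mul_cancel_left])
      simp [h₂]
    · simp [hemb, h₁]

theorem support_coeff_emb_mul
    (hmul : ∀ f g : D, ∀ x : G, coeff (f * g) x =
      ∑ᶠ p : G × G, if p.1 * p.2 = x then coeff f p.1 * coeff g p.2 else 0)
    (hemb : ∀ g x : G, coeff (emb g) x = if x = g then 1 else 0) (g : G) (h : D) :
    support (coeff (emb g * h)) = g • support (coeff h) := by
  ext x
  rw [mem_smul_set_iff_inv_smul_mem, mem_support, mem_support, coeff_emb_mul hmul hemb, smul_eq_mul]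

end Series

theorem summable_family_in_malcev_neumann_general
    (K G D : Type*) [DivisionRing K] [Group G] [LinearOrder G]
    [CovariantClass G G (· * ·) (· ≤ ·)]
    [CovariantClass G G (Function.swap (· * ·)) (· ≤ ·)]
    [Ring D] (coeff : D → G → K)
    (hwf : ∀ f : D, (Function.support (coeff f)).IsWF)
    (hsurj : ∀ F : G → K, (Function.support F).IsWF → ∃ f : D, coeff f = F)
    (hmul : ∀ f g : D, ∀ x : G, coeff (f * g) x =
      ∑ᶠ p : G × G, if p.1 * p.2 = x then coeff f p.1 * coeff g p.2 else 0)
    (emb : G → D) (hemb : ∀ g x : G, coeff (emb g) x = if x = g then 1 else 0)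
    (α : Ordinal) (t : ↥(Set.Iic α) → G)
    (hchain : ∀ β γ : ↥(Set.Iic α), β < γ →
      {x : G | ∃ n : ℕ, ((t β)⁻¹) ^ n ≤ x ∧ x ≤ (t β) ^ n} ⊂
      {x : G | ∃ n : ℕ, ((t γ)⁻¹) ^ n ≤ x ∧ x ≤ (t γ) ^ n})
    (f : ↥(Set.Iic α) → D)
    (hsupp : ∀ β, ∀ x : G, coeff (f β) x ≠ 0 →
      1 ≤ x ∧ ∃ n : ℕ, ((t β)⁻¹) ^ n ≤ x ∧ x ≤ (t β) ^ n) :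
    (⋃ β, Function.support (coeff (emb (t β) * f β))).IsWF ∧
    (∀ x : G, {β | coeff (emb (t β) * f β) x ≠ 0}.Finite) ∧
    ∃ F : D, ∀ x : G, coeff F x = ∑ᶠ β, coeff (emb (t β) * f β) x := by
  have hlayered : ∀ β γ, β < γ → ∀ x ∈ support (coeff (emb (t β) * f β)),
      ∀ y ∈ support (coeff (emb (t γ) * f γ)), x < y := by
    intro β γ hβγ x hx y hy
    rw [support_coeff_emb_mul hmul hemb] at hx hy
    obtain ⟨a, ha, rfl⟩ := hx
    obtain ⟨b, hb, rfl⟩ := hy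
    exact mul_lt_mul_of_principalConvex_ssubset (hchain β γ hβγ) (hsupp β a ha).2
      (hsupp γ b hb).1
  have hWF := isWF_iUnion_of_layered (fun β => hwf _) hlayered
  refine ⟨hWF, fun x => (subsingleton_of_layered hlayered x).finite, ?_⟩
  obtain ⟨F, hF⟩ := hsurj _ (hWF.mono (support_finsum_subset_iUnion _))
  exact ⟨F, fun x => congrFun hF x⟩

/-- Let `K((G,<))` be a Malcev-Neumann series field (axiomatised by
its coefficient function `coeff` and the embedding `emb` of `G`).  Let `α` be an ordinal
and `{H_β}_{β ≤ α}` a strictly increasing family of principal convex subgroups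
`H_β = {x : t_β⁻ⁿ ≤ x ≤ t_βⁿ for some n}` with `t_β > 1`.  If `f_β` has support
contained in `{x ∈ H_β : x ≥ 1}` for each `β ≤ α`, then `⋃_β supp(t_β·f_β)` is
well-ordered, each `x ∈ G` lies in only finitely many `supp(t_β·f_β)`, and hence the
sum `Σ_{β ≤ α} t_β·f_β` is a well-defined element of `K((G,<))`. -/
theorem summable_family_in_malcev_neumann
    (K G D : Type*) [DivisionRing K] [Group G] [LinearOrder G]
    [CovariantClass G G (· * ·) (· ≤ ·)]
    [CovariantClass G G (Function.swap (· * ·)) (· ≤ ·)]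
    [Ring D] (coeff : D → G → K)
    (hext : Function.Injective coeff)
    (hadd : ∀ f g : D, ∀ x : G, coeff (f + g) x = coeff f x + coeff g x)
    (hwf : ∀ f : D, (Function.support (coeff f)).IsWF)
    (hsurj : ∀ F : G → K, (Function.support F).IsWF → ∃ f : D, coeff f = F)
    (hmul : ∀ f g : D, ∀ x : G, coeff (f * g) x =
      ∑ᶠ p : G × G, if p.1 * p.2 = x then coeff f p.1 * coeff g p.2 else 0)
    (emb : G → D) (hemb : ∀ g x : G, coeff (emb g) x = if x = g then 1 else 0)
    (α : Ordinal) (t : ↥(Set.Iic α) → G)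
    (ht : ∀ β, 1 < t β)
    (hchain : ∀ β γ : ↥(Set.Iic α), β < γ →
      {x : G | ∃ n : ℕ, ((t β)⁻¹) ^ n ≤ x ∧ x ≤ (t β) ^ n} ⊂
      {x : G | ∃ n : ℕ, ((t γ)⁻¹) ^ n ≤ x ∧ x ≤ (t γ) ^ n})
    (f : ↥(Set.Iic α) → D)
    (hsupp : ∀ β, ∀ x : G, coeff (f β) x ≠ 0 →
      1 ≤ x ∧ ∃ n : ℕ, ((t β)⁻¹) ^ n ≤ x ∧ x ≤ (t β) ^ n) :
    (⋃ β, Function.support (coeff (emb (t β) * f β))).IsWF ∧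
    (∀ x : G, {β | coeff (emb (t β) * f β) x ≠ 0}.Finite) ∧
    ∃ F : D, ∀ x : G, coeff F x = ∑ᶠ β, coeff (emb (t β) * f β) x :=
  summable_family_in_malcev_neumann_general K G D coeff hwf hsurj hmul emb hemb α t hchain f hsupp
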